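/- arXiv:2504.09648 — 3 statements merged into one kernel-verified Lean document; each statement's English description precedes it below -/
import Mathlib

section
/- Let Σ⋆ = U⋆ D⋆ U⋆ᵀ be a rank-r⋆ PSD matrix with U⋆ ∈ ℝ^{d×r⋆} having orthonormal columns and D⋆ diagonal positive. Let V ∈ ℝ^{d×r̂} have orthonormal columns with orthogonal complement V_⊥. Then for every k ≤ min(r̂, r⋆): √(γ_k(VᵀΣ⋆V)) ≥ √(γ_k(Σ⋆)) − ‖V_⊥ᵀ U⋆ (D⋆)^{1/2}‖, where γ_k denotes the k-th largest eigenvalue and ‖·‖ the spectral norm. -/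
open Matrix
open scoped Matrix.Norms.L2Operator

/-- The `k`-th largest entry of a finite tuple of reals (0-indexed: `k = 0` is the largest). -/
noncomputable def kthLargest {n : ℕ} (f : Fin n → ℝ) (k : Fin n) : ℝ :=
  f (Tuple.sort f k.rev)

section Helpers

variable {n : ℕ}

lemma sum_dot {m : ℕ} (s : Finset (Fin m)) (f : Fin m → Fin m → ℝ) (y : Fin m → ℝ) :
    (∑ j ∈ s, f j) ⬝ᵥ y = ∑ j ∈ s, f j ⬝ᵥ y := by
  simp only [dotProduct, Finset.sum_apply, Finset.sum_mul]
  exact Finset.sum_comm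

lemma dot_sum {m : ℕ} (s : Finset (Fin m)) (f : Fin m → Fin m → ℝ) (y : Fin m → ℝ) :
    y ⬝ᵥ (∑ j ∈ s, f j) = ∑ j ∈ s, y ⬝ᵥ f j := by
  simp only [dotProduct, Finset.sum_apply, Finset.mul_sum]
  exact Finset.sum_comm

lemma dot_ite {v : Fin n → Fin n → ℝ}
    (hv : ∀ a b, v a ⬝ᵥ v b = if a = b then (1:ℝ) else 0)
    (s : Finset (Fin n)) (c e : Fin n → ℝ) :
    (∑ j ∈ s, c j • v j) ⬝ᵥ (∑ j ∈ s, e j • v j) = ∑ j ∈ s, c j * e j := by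
  classical
  rw [sum_dot]
  refine Finset.sum_congr rfl fun j hj => ?_
  rw [smul_dotProduct, dot_sum]
  have h1 : ∀ i ∈ s, v j ⬝ᵥ (e i • v i) = if j = i then e i else 0 := by
    intro i _
    rw [dotProduct_smul, hv]
    by_cases h : j = i <;> simp [h]
  rw [Finset.sum_congr rfl h1, Finset.sum_ite_eq s j e]
  simp [hj, smul_eq_mul]

lemma li_of_dot {v : Fin n → Fin n → ℝ}
    (hv : ∀ a b, v a ⬝ᵥ v b = if a = b then (1:ℝ) else 0) :
    LinearIndependent ℝ v := by
  classical
  rw [linearIndependent_iff']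
  intro s g hsum i hi
  have h := congrArg (fun x => x ⬝ᵥ v i) hsum
  rw [sum_dot, zero_dotProduct] at h
  have h2 : ∀ j ∈ s, (g j • v j) ⬝ᵥ v i = if j = i then g j else 0 := by
    intro j _
    rw [smul_dotProduct, hv]
    by_cases hji : j = i <;> simp [hji]
  rw [Finset.sum_congr rfl h2, Finset.sum_ite_eq' s i g, if_pos hi] at h
  exact h.symm ▸ rfl

lemma kthLargest_antitone (f : Fin n → ℝ) : Antitone (kthLargest f) := by
  intro a b hab
  have := Tuple.monotone_sort f (Fin.rev_le_rev.2 hab)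
  exact this

end Helpers

section Spectral

variable {n : ℕ} {P : Matrix (Fin n) (Fin n) ℝ} (hP : P.IsHermitian)

/-- eigenvector for the `j`-th largest eigenvalue -/
noncomputable def evec (j : Fin n) : Fin n → ℝ :=
  ⇑(hP.eigenvectorBasis (Tuple.sort hP.eigenvalues j.rev))

lemma evec_dot (a b : Fin n) :
    evec hP a ⬝ᵥ evec hP b = if a = b then (1:ℝ) else 0 := by
  have h := hP.eigenvectorBasis.orthonormal
  rw [orthonormal_iff_ite] at h
  have h2 := h (Tuple.sort hP.eigenvalues a.rev) (Tuple.sort hP.eigenvalues b.rev)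
  rw [PiLp.inner_apply] at h2
  have hinj : (Tuple.sort hP.eigenvalues a.rev = Tuple.sort hP.eigenvalues b.rev) ↔ a = b := by
    rw [EmbeddingLike.apply_eq_iff_eq, Fin.rev_inj]
  simp only [RCLike.inner_apply, starRingEnd_apply, star_trivial] at h2
  have hdot : evec hP a ⬝ᵥ evec hP b = ∑ x, (hP.eigenvectorBasis (Tuple.sort hP.eigenvalues a.rev)) x * (hP.eigenvectorBasis (Tuple.sort hP.eigenvalues b.rev)) x := rfl
  rw [hdot, Finset.sum_congr rfl (fun x _ => mul_comm _ _), h2]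
  exact if_congr hinj rfl rfl

lemma mulVec_evec (j : Fin n) :
    P *ᵥ evec hP j = kthLargest hP.eigenvalues j • evec hP j :=
  hP.mulVec_eigenvectorBasis (Tuple.sort hP.eigenvalues j.rev)

/-- span of eigenvectors indexed by `s` -/
noncomputable def spanEvec (s : Finset (Fin n)) : Submodule ℝ (Fin n → ℝ) :=
  Submodule.span ℝ (Set.range fun j : s => evec hP j)

lemma finrank_spanEvec (s : Finset (Fin n)) :
    Module.finrank ℝ (spanEvec hP s) = s.card := by
  have h := finrank_span_eq_card (R := ℝ) ((li_of_dot (evec_dot hP)).comp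
    (Subtype.val : s → Fin n) Subtype.val_injective)
  rw [Fintype.card_coe] at h
  exact h

lemma mem_spanEvec (s : Finset (Fin n)) {x : Fin n → ℝ} (hx : x ∈ spanEvec hP s) :
    ∃ c : Fin n → ℝ, x = ∑ j ∈ s, c j • evec hP j := by
  classical
  rw [spanEvec, Submodule.mem_span_range_iff_exists_fun] at hx
  obtain ⟨c, hc⟩ := hx
  refine ⟨fun j => if h : j ∈ s then c ⟨j, h⟩ else 0, ?_⟩
  rw [← hc, ← Finset.sum_coe_sort s (fun j => (if h : j ∈ s then c ⟨j, h⟩ else 0) • evec hP j)]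
  refine Finset.sum_congr rfl fun i _ => ?_
  rw [dif_pos i.2]

lemma quad_eqs (s : Finset (Fin n)) (c : Fin n → ℝ) :
    (∑ j ∈ s, c j • evec hP j) ⬝ᵥ (∑ j ∈ s, c j • evec hP j) = ∑ j ∈ s, c j * c j ∧
    (∑ j ∈ s, c j • evec hP j) ⬝ᵥ (P *ᵥ ∑ j ∈ s, c j • evec hP j)
      = ∑ j ∈ s, kthLargest hP.eigenvalues j * (c j * c j) ∧
    (P *ᵥ ∑ j ∈ s, c j • evec hP j) ⬝ᵥ (P *ᵥ ∑ j ∈ s, c j • evec hP j)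
      = ∑ j ∈ s, (kthLargest hP.eigenvalues j * c j) * (kthLargest hP.eigenvalues j * c j) := by
  have hPx : P *ᵥ ∑ j ∈ s, c j • evec hP j
      = ∑ j ∈ s, (kthLargest hP.eigenvalues j * c j) • evec hP j := by
    rw [← Matrix.mulVecLin_apply, map_sum]
    refine Finset.sum_congr rfl fun j _ => ?_
    rw [LinearMap.map_smul, Matrix.mulVecLin_apply, mulVec_evec, smul_smul, mul_comm]
  refine ⟨dot_ite (evec_dot hP) s c c, ?_, ?_⟩
  · rw [hPx, dot_ite (evec_dot hP) s c _]
    refine Finset.sum_congr rfl fun j _ => by ring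
  · rw [hPx, dot_ite (evec_dot hP) s _ _]

end Spectral

section CF

variable {n : ℕ} {P : Matrix (Fin n) (Fin n) ℝ} (hP : P.IsHermitian)

lemma cf_upper (k : Fin n) (W : Submodule ℝ (Fin n → ℝ))
    (hW : (k : ℕ) + 1 ≤ Module.finrank ℝ W) :
    ∃ x, x ∈ W ∧ x ≠ 0 ∧ x ⬝ᵥ (P *ᵥ x) ≤ kthLargest hP.eigenvalues k * (x ⬝ᵥ x) := by
  classical
  set S := spanEvec hP (Finset.Ici k) with hS
  have hdimS : Module.finrank ℝ S = n - k := by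
    rw [hS, finrank_spanEvec, Fin.card_Ici]
  -- dimension count
  have hsum := Submodule.finrank_sup_add_finrank_inf_eq W S
  have hle : Module.finrank ℝ ↥(W ⊔ S) ≤ n := by
    have := Submodule.finrank_le (W ⊔ S)
    rwa [Module.finrank_fin_fun] at this
  have hpos : 0 < Module.finrank ℝ ↥(W ⊓ S) := by omega
  have hne : (W ⊓ S) ≠ ⊥ := by
    intro h
    rw [h, finrank_bot] at hpos
    omega
  obtain ⟨x, hxmem, hx0⟩ := Submodule.exists_mem_ne_zero_of_ne_bot hne
  obtain ⟨c, hc⟩ := mem_spanEvec hP (Finset.Ici k) (hxmem.2)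
  obtain ⟨h1, h2, _⟩ := quad_eqs hP (Finset.Ici k) c
  rw [← hc] at h1 h2
  refine ⟨x, hxmem.1, hx0, ?_⟩
  rw [h1, h2, Finset.mul_sum]
  refine Finset.sum_le_sum fun j hj => ?_
  have hjk : k ≤ j := Finset.mem_Ici.1 hj
  have := kthLargest_antitone hP.eigenvalues hjk
  nlinarith [mul_self_nonneg (c j)]

lemma cf_lower_pack (k : Fin n) :
    Module.finrank ℝ (spanEvec hP (Finset.Iic k)) = (k : ℕ) + 1 ∧
    (∀ x ∈ spanEvec hP (Finset.Iic k),
      kthLargest hP.eigenvalues k * (x ⬝ᵥ x) ≤ x ⬝ᵥ (P *ᵥ x)) ∧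
    (∀ t, 0 < t → t ≤ kthLargest hP.eigenvalues k → ∀ x ∈ spanEvec hP (Finset.Iic k),
      t * (x ⬝ᵥ (P *ᵥ x)) ≤ (P *ᵥ x) ⬝ᵥ (P *ᵥ x)) := by
  classical
  refine ⟨by rw [finrank_spanEvec, Fin.card_Iic], ?_, ?_⟩
  · intro x hx
    obtain ⟨c, hc⟩ := mem_spanEvec hP _ hx
    obtain ⟨h1, h2, _⟩ := quad_eqs hP (Finset.Iic k) c
    rw [← hc] at h1 h2
    rw [h1, h2, Finset.mul_sum]
    refine Finset.sum_le_sum fun j hj => ?_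
    have hjk : j ≤ k := Finset.mem_Iic.1 hj
    have := kthLargest_antitone hP.eigenvalues hjk
    nlinarith [mul_self_nonneg (c j)]
  · intro t ht htk x hx
    obtain ⟨c, hc⟩ := mem_spanEvec hP _ hx
    obtain ⟨_, h2, h3⟩ := quad_eqs hP (Finset.Iic k) c
    rw [← hc] at h2 h3
    rw [h2, h3, Finset.mul_sum]
    refine Finset.sum_le_sum fun j hj => ?_
    have hjk : j ≤ k := Finset.mem_Iic.1 hj
    have hmu : t ≤ kthLargest hP.eigenvalues j :=
      le_trans htk (kthLargest_antitone hP.eigenvalues hjk)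
    nlinarith [mul_self_nonneg (c j)]

end CF

section Weyl

lemma dot_mulVec_abs_le {m n : ℕ} (R : Matrix (Fin m) (Fin n) ℝ) (x : Fin n → ℝ)
    (y : Fin m → ℝ) :
    y ⬝ᵥ (R *ᵥ x) ≤ ‖R‖ * Real.sqrt (y ⬝ᵥ y) * Real.sqrt (x ⬝ᵥ x) := by
  let x' : EuclideanSpace ℝ (Fin n) := WithLp.toLp 2 x
  let y' : EuclideanSpace ℝ (Fin m) := WithLp.toLp 2 y
  let z : EuclideanSpace ℝ (Fin m) := WithLp.toLp 2 (R *ᵥ x)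
  have h1 : y ⬝ᵥ (R *ᵥ x) = inner ℝ y' z := by
    rw [PiLp.inner_apply]
    simp [dotProduct, y', z, RCLike.inner_apply, mul_comm]
  have h2 : |inner ℝ y' z| ≤ ‖y'‖ * ‖z‖ := abs_real_inner_le_norm y' z
  have h3 : ‖z‖ ≤ ‖R‖ * ‖x'‖ := by have := R.l2_opNorm_mulVec x'; exact this
  have h4 : Real.sqrt (x ⬝ᵥ x) = ‖x'‖ := by
    rw [show x ⬝ᵥ x = inner ℝ x' x' by
      rw [PiLp.inner_apply]; simp [dotProduct, x', RCLike.inner_apply, mul_comm, sq]]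
    rw [real_inner_self_eq_norm_mul_norm]
    exact Real.sqrt_mul_self (norm_nonneg x')
  have h5 : Real.sqrt (y ⬝ᵥ y) = ‖y'‖ := by
    rw [show y ⬝ᵥ y = inner ℝ y' y' by
      rw [PiLp.inner_apply]; simp [dotProduct, y', RCLike.inner_apply, mul_comm, sq]]
    rw [real_inner_self_eq_norm_mul_norm]
    exact Real.sqrt_mul_self (norm_nonneg y')
  rw [h1, h4, h5]
  calc (inner ℝ y' z : ℝ) ≤ |inner ℝ y' z| := le_abs_self _
    _ ≤ ‖y'‖ * ‖z‖ := h2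
    _ ≤ ‖y'‖ * (‖R‖ * ‖x'‖) := mul_le_mul_of_nonneg_left h3 (norm_nonneg y')
    _ = ‖R‖ * ‖y'‖ * ‖x'‖ := by ring

lemma dotProduct_self_pos' {n : ℕ} {x : Fin n → ℝ} (hx : x ≠ 0) : 0 < x ⬝ᵥ x := by
  have hnn : 0 ≤ x ⬝ᵥ x := Finset.sum_nonneg fun i _ => mul_self_nonneg (x i)
  rcases lt_or_eq_of_le hnn with h | h
  · exact h
  · exact absurd ((dotProduct_self_eq_zero).1 h.symm) hx

/-- Weyl's inequality -/
lemma weyl {n : ℕ} {P Q : Matrix (Fin n) (Fin n) ℝ} (hP : P.IsHermitian)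
    (hQ : Q.IsHermitian) (k : Fin n) :
    kthLargest hQ.eigenvalues k ≤ kthLargest hP.eigenvalues k + ‖P - Q‖ := by
  obtain ⟨hdim, hlow, _⟩ := cf_lower_pack hQ k
  obtain ⟨x, hxW, hx0, hup⟩ := cf_upper hP k _ (le_of_eq hdim.symm)
  have hlx := hlow x hxW
  have hR : x ⬝ᵥ ((Q - P) *ᵥ x) ≤ ‖P - Q‖ * (x ⬝ᵥ x) := by
    have h := dot_mulVec_abs_le (Q - P) x x
    have hs : Real.sqrt (x ⬝ᵥ x) * Real.sqrt (x ⬝ᵥ x) = x ⬝ᵥ x :=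
      Real.mul_self_sqrt (Finset.sum_nonneg fun i _ => mul_self_nonneg (x i))
    have hnorm : ‖Q - P‖ = ‖P - Q‖ := by rw [← norm_neg]; congr 1; abel
    calc x ⬝ᵥ ((Q - P) *ᵥ x) ≤ ‖Q - P‖ * Real.sqrt (x ⬝ᵥ x) * Real.sqrt (x ⬝ᵥ x) := h
      _ = ‖P - Q‖ * (x ⬝ᵥ x) := by rw [hnorm, mul_assoc, hs]
  have hsplit : x ⬝ᵥ (Q *ᵥ x) = x ⬝ᵥ (P *ᵥ x) + x ⬝ᵥ ((Q - P) *ᵥ x) := by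
    rw [Matrix.sub_mulVec, dotProduct_sub]; ring
  have hpos := dotProduct_self_pos' hx0
  have hkey : kthLargest hQ.eigenvalues k * (x ⬝ᵥ x)
      ≤ (kthLargest hP.eigenvalues k + ‖P - Q‖) * (x ⬝ᵥ x) := by nlinarith
  exact le_of_mul_le_mul_right hkey hpos

end Weyl

section Gram

lemma gram_ge {m n : ℕ} (A : Matrix (Fin m) (Fin n) ℝ)
    (hG : (Aᵀ * A).IsHermitian) (hH : (A * Aᵀ).IsHermitian)
    (k1 : Fin n) (k2 : Fin m) (hk : (k1 : ℕ) = (k2 : ℕ)) :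
    kthLargest hG.eigenvalues k1 ≤ kthLargest hH.eigenvalues k2 := by
  classical
  set t := kthLargest hG.eigenvalues k1 with hts
  by_cases ht : t ≤ 0
  · have hpsd : (A * Aᵀ).PosSemidef := by
      have h := Matrix.posSemidef_conjTranspose_mul_self (Aᵀ)
      rwa [Matrix.conjTranspose_eq_transpose_of_trivial, Matrix.transpose_transpose] at h
    have h0 : 0 ≤ kthLargest hH.eigenvalues k2 := hpsd.eigenvalues_nonneg _
    linarith
  push_neg at ht
  obtain ⟨hdim, hlow, hsq⟩ := cf_lower_pack hG k1
  set W := spanEvec hG (Finset.Iic k1) with hW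
  let f : (Fin n → ℝ) →ₗ[ℝ] (Fin m → ℝ) := Matrix.mulVecLin A
  -- key identities
  have e1 : ∀ x : Fin n → ℝ, (A *ᵥ x) ⬝ᵥ (A *ᵥ x) = x ⬝ᵥ ((Aᵀ * A) *ᵥ x) := by
    intro x
    rw [← Matrix.mulVec_mulVec, Matrix.dotProduct_mulVec x Aᵀ, Matrix.vecMul_transpose]
  have e2 : ∀ x : Fin n → ℝ,
      (A *ᵥ x) ⬝ᵥ ((A * Aᵀ) *ᵥ (A *ᵥ x)) = ((Aᵀ * A) *ᵥ x) ⬝ᵥ ((Aᵀ * A) *ᵥ x) := by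
    intro x
    have hz : (A * Aᵀ) *ᵥ (A *ᵥ x) = A *ᵥ ((Aᵀ * A) *ᵥ x) := by
      rw [Matrix.mulVec_mulVec, Matrix.mulVec_mulVec, Matrix.mul_assoc]
    rw [hz, Matrix.dotProduct_mulVec (A *ᵥ x) A, ← Matrix.mulVec_transpose,
      Matrix.mulVec_mulVec]
  -- injectivity on W
  have hinj : ∀ x ∈ W, A *ᵥ x = 0 → x = 0 := by
    intro x hx h0
    have h1 := hlow x hx
    have h2 : x ⬝ᵥ ((Aᵀ * A) *ᵥ x) = 0 := by rw [← e1, h0]; simp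
    by_contra hx0
    have := dotProduct_self_pos' hx0
    nlinarith
  -- finrank of image
  have hrange : LinearMap.range (f.domRestrict W) = W.map f := LinearMap.range_domRestrict W f
  have hinjg : Function.Injective (f.domRestrict W) := by
    rw [← LinearMap.ker_eq_bot]
    rw [Submodule.eq_bot_iff]
    intro z hz
    rw [LinearMap.mem_ker, LinearMap.domRestrict_apply] at hz
    exact Subtype.ext (hinj z z.2 hz)
  have hdim2 : Module.finrank ℝ (W.map f) = (k1 : ℕ) + 1 := by
    rw [← hrange, LinearMap.finrank_range_of_inj hinjg, hdim]
  -- apply cf_upper for H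
  obtain ⟨y, hyW, hy0, hyup⟩ := cf_upper hH k2 (W.map f) (by rw [hdim2, hk])
  obtain ⟨x, hxW, hxy⟩ := Submodule.mem_map.1 hyW
  have hxy' : y = A *ᵥ x := hxy.symm
  have hbound : t * (y ⬝ᵥ y) ≤ y ⬝ᵥ ((A * Aᵀ) *ᵥ y) := by
    rw [hxy', e1, e2]
    exact hsq t ht le_rfl x hxW
  have hypos := dotProduct_self_pos' hy0
  nlinarith

end Gram

section Final

lemma kthLargest_congr {n : ℕ} {M1 M2 : Matrix (Fin n) (Fin n) ℝ} (h : M1 = M2)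
    (h1 : M1.IsHermitian) (h2 : M2.IsHermitian) (k : Fin n) :
    kthLargest h1.eigenvalues k = kthLargest h2.eigenvalues k := by
  subst h; rfl

lemma isHerm_tt {m n : ℕ} (A : Matrix (Fin m) (Fin n) ℝ) : (Aᵀ * A).IsHermitian := by
  rw [Matrix.IsHermitian, Matrix.conjTranspose_eq_transpose_of_trivial, Matrix.transpose_mul,
    Matrix.transpose_transpose]

lemma psd_tt {m n : ℕ} (A : Matrix (Fin m) (Fin n) ℝ) : (Aᵀ * A).PosSemidef := by
  have h := Matrix.posSemidef_conjTranspose_mul_self A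
  rwa [Matrix.conjTranspose_eq_transpose_of_trivial] at h


/-- Let `Σ⋆ = U⋆ D⋆ U⋆ᵀ` be a rank `r⋆` PSD matrix with `U⋆` having orthonormal
columns and `D⋆` diagonal positive. Let `V ∈ ℝ^{d×r̂}` have orthonormal columns with
orthogonal complement `V_⊥`. Then for every `k ≤ min(r̂, r⋆)`:
`√(γ_k(VᵀΣ⋆V)) ≥ √(γ_k(Σ⋆)) − ‖V_⊥ᵀ U⋆ (D⋆)^{1/2}‖`. -/
theorem stmt3 {d rh rstar : ℕ} (hrd : rh ≤ d) (hrsd : rstar ≤ d)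
    (Ustar : Matrix (Fin d) (Fin rstar) ℝ) (dvec : Fin rstar → ℝ)
    (hU : Ustarᵀ * Ustar = 1) (hdpos : ∀ i, 0 < dvec i)
    (Sig : Matrix (Fin d) (Fin d) ℝ)
    (hSig : Sig = Ustar * Matrix.diagonal dvec * Ustarᵀ)
    (hSigH : Sig.IsHermitian)
    (V : Matrix (Fin d) (Fin rh) ℝ) (Vperp : Matrix (Fin d) (Fin (d - rh)) ℝ)
    (hV : Vᵀ * V = 1) (hVperp : Vperpᵀ * Vperp = 1)
    (horth : Vᵀ * Vperp = 0) (hcomp : V * Vᵀ + Vperp * Vperpᵀ = 1)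
    (hC : (Vᵀ * Sig * V).IsHermitian)
    (k : Fin rh) (hk : (k : ℕ) < rstar) :
    Real.sqrt (kthLargest hC.eigenvalues k) ≥
      Real.sqrt (kthLargest hSigH.eigenvalues (Fin.castLE hrd k)) -
        ‖Vperpᵀ * Ustar * Matrix.diagonal (fun i => Real.sqrt (dvec i))‖ := by
  classical
  set Ds : Matrix (Fin rstar) (Fin rstar) ℝ := Matrix.diagonal (fun i => Real.sqrt (dvec i))
    with hDs
  set M : Matrix (Fin d) (Fin rstar) ℝ := Ustar * Ds with hM
  set A : Matrix (Fin rh) (Fin rstar) ℝ := Vᵀ * M with hA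
  set B : Matrix (Fin (d - rh)) (Fin rstar) ℝ := Vperpᵀ * M with hB
  set kA : Fin rstar := ⟨(k : ℕ), hk⟩ with hkA
  set kd : Fin d := Fin.castLE hrd k with hkd
  have hdsq : Ds * Ds = Matrix.diagonal dvec := by
    rw [hDs, Matrix.diagonal_mul_diagonal]
    exact congrArg Matrix.diagonal (funext fun i => Real.mul_self_sqrt (hdpos i).le)
  have hMt : Mᵀ = Ds * Ustarᵀ := by
    rw [hM, Matrix.transpose_mul, hDs, Matrix.diagonal_transpose]
  have hMMt : M * Mᵀ = Sig := by
    rw [hMt, hM, hSig]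
    simp only [← Matrix.mul_assoc]
    rw [Matrix.mul_assoc Ustar Ds Ds, hdsq]
  have hMtM : Mᵀ * M = Matrix.diagonal dvec := by
    rw [hMt, hM]
    simp only [← Matrix.mul_assoc]
    rw [Matrix.mul_assoc Ds Ustarᵀ Ustar, hU, Matrix.mul_one, hdsq]
  have hCA : Vᵀ * Sig * V = A * Aᵀ := by
    rw [hA, Matrix.transpose_mul, Matrix.transpose_transpose, ← hMMt]
    simp only [← Matrix.mul_assoc]
  have hAtA : Aᵀ * A = Mᵀ * (V * Vᵀ) * M := by
    rw [hA, Matrix.transpose_mul, Matrix.transpose_transpose]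
    simp only [← Matrix.mul_assoc]
  have hBtB : Bᵀ * B = Mᵀ * (Vperp * Vperpᵀ) * M := by
    rw [hB, Matrix.transpose_mul, Matrix.transpose_transpose]
    simp only [← Matrix.mul_assoc]
  have hsum : Aᵀ * A + Bᵀ * B = Matrix.diagonal dvec := by
    rw [hAtA, hBtB, ← Matrix.add_mul, ← Matrix.mul_add, hcomp, Matrix.mul_one, hMtM]
  -- Hermitian instances
  have hGA : (Aᵀ * A).IsHermitian := isHerm_tt A
  have hHA : (A * Aᵀ).IsHermitian := by
    have := isHerm_tt Aᵀ
    rwa [Matrix.transpose_transpose] at this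
  have hD : (Matrix.diagonal dvec).IsHermitian := by
    rw [← hMtM]; exact isHerm_tt M
  have hGM : ((Mᵀ)ᵀ * Mᵀ).IsHermitian := by
    rw [Matrix.transpose_transpose, hMMt]; exact hSigH
  have hHM : (Mᵀ * (Mᵀ)ᵀ).IsHermitian := by
    rw [Matrix.transpose_transpose]; exact isHerm_tt M
  -- step 1 : γ_k(C) = γ_k(A Aᵀ)
  have s1 : kthLargest hC.eigenvalues k = kthLargest hHA.eigenvalues k :=
    kthLargest_congr hCA hC hHA k
  -- step 2 : γ_k(AᵀA) ≤ γ_k(A Aᵀ)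
  have s2 : kthLargest hGA.eigenvalues kA ≤ kthLargest hHA.eigenvalues k :=
    gram_ge A hGA hHA kA k rfl
  -- step 3 : Weyl
  have s3 : kthLargest hD.eigenvalues kA ≤ kthLargest hGA.eigenvalues kA
      + ‖Aᵀ * A - Matrix.diagonal dvec‖ := weyl hGA hD kA
  have hdiff : Aᵀ * A - Matrix.diagonal dvec = -(Bᵀ * B) := by
    rw [← hsum]; abel
  have hnB : ‖Aᵀ * A - Matrix.diagonal dvec‖
      = ‖Vperpᵀ * Ustar * Ds‖ * ‖Vperpᵀ * Ustar * Ds‖ := by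
    rw [hdiff, norm_neg]
    have h1 : Bᵀ = Bᴴ := (Matrix.conjTranspose_eq_transpose_of_trivial B).symm
    have h2 : B = Vperpᵀ * Ustar * Ds := by rw [hB, hM, Matrix.mul_assoc]
    rw [h1, Matrix.l2_opNorm_conjTranspose_mul_self, h2]
  -- step 4 : γ_k(Σ) ≤ γ_k(D)
  have s4a : kthLargest hGM.eigenvalues kd ≤ kthLargest hHM.eigenvalues kA :=
    gram_ge Mᵀ hGM hHM kd kA rfl
  have s4b : kthLargest hSigH.eigenvalues kd = kthLargest hGM.eigenvalues kd :=
    kthLargest_congr (by rw [Matrix.transpose_transpose, hMMt]) _ hGM kd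
  have s4c : kthLargest hHM.eigenvalues kA = kthLargest hD.eigenvalues kA :=
    kthLargest_congr (by rw [Matrix.transpose_transpose, hMtM]) hHM hD kA
  -- nonnegativity
  have hCpos : 0 ≤ kthLargest hC.eigenvalues k := by
    have hpsd : (Vᵀ * Sig * V).PosSemidef := by
      rw [hCA]
      have := psd_tt Aᵀ
      rwa [Matrix.transpose_transpose] at this
    exact hpsd.eigenvalues_nonneg _
  have hSpos : 0 ≤ kthLargest hSigH.eigenvalues kd := by
    have hpsd : Sig.PosSemidef := by
      rw [← hMMt]
      have := psd_tt Mᵀ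
      rwa [Matrix.transpose_transpose] at this
    exact hpsd.eigenvalues_nonneg _
  -- combine
  set a := kthLargest hSigH.eigenvalues kd with ha
  set b := ‖Vperpᵀ * Ustar * Ds‖ with hb
  set c := kthLargest hC.eigenvalues k with hc
  have hbnn : 0 ≤ b := norm_nonneg _
  have hkey : a - b * b ≤ c := by
    rw [hnB] at s3
    rw [s4b] at hSpos ⊢
    linarith [s4a, s4c ▸ s4a, s1 ▸ s2]
  rw [ge_iff_le, sub_le_iff_le_add]
  rcases le_or_gt (Real.sqrt a) b with hcase | hcase
  · linarith [Real.sqrt_nonneg c]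
  · have hsq : (Real.sqrt a - b) ^ 2 ≤ c := by
      nlinarith [Real.sq_sqrt hSpos, Real.sqrt_nonneg a]
    have := Real.sqrt_le_sqrt hsq
    rw [Real.sqrt_sq (by linarith)] at this
    linarith
end Final
end

section
/- Let z be a hypergeometric random variable with population size n, k success states, and m draws. Then for any 0 ≤ t ≤ k/n, P(z ≤ (k/n − t) m) ≤ exp(−2 m t²). -/
open MeasureTheory Finset


lemma bern_pos (q : ℝ) (hq0 : 0 ≤ q) (hq1 : q ≤ 1) (x : ℝ) :
    0 < 1 - q + q * Real.exp x := by
  rcases eq_or_lt_of_le hq0 with h | h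
  · simp [← h]
  · have := Real.exp_pos x
    nlinarith

lemma bern_hoeffding (q : ℝ) (hq0 : 0 ≤ q) (hq1 : q ≤ 1) (x : ℝ) (hx : 0 ≤ x) :
    1 - q + q * Real.exp x ≤ Real.exp (q * x + x ^ 2 / 8) := by
  set d : ℝ → ℝ := fun y => 1 - q + q * Real.exp y with hd
  have hdpos : ∀ y, 0 < d y := fun y => bern_pos q hq0 hq1 y
  set F : ℝ → ℝ := fun y => q * y + y ^ 2 / 8 - Real.log (d y) with hF
  set G : ℝ → ℝ := fun y => q + y / 4 - q * Real.exp y / d y with hG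
  have hdderiv : ∀ y, HasDerivAt d (q * Real.exp y) y := by
    intro y
    exact ((Real.hasDerivAt_exp y).const_mul q).const_add (1 - q)
  have hFderiv : ∀ y, HasDerivAt F (G y) y := by
    intro y
    have h1 : HasDerivAt (fun y : ℝ => q * y + y ^ 2 / 8) (q + y * 2 / 8) y := by
      have := ((hasDerivAt_id y).const_mul q).add
        (((hasDerivAt_pow 2 y)).div_const 8)
      refine this.congr_deriv ?_
      norm_num
      ring
    have h2 : HasDerivAt (fun y => Real.log (d y)) (q * Real.exp y / d y) y :=
      (hdderiv y).log (hdpos y).ne'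
    have := h1.sub h2
    refine this.congr_deriv ?_
    show _ = q + y / 4 - q * Real.exp y / d y
    ring
  have hGderiv : ∀ y, HasDerivAt G (1 / 4 - q * Real.exp y * (1 - q) / (d y) ^ 2) y := by
    intro y
    have h1 : HasDerivAt (fun y : ℝ => q + y / 4) (1 / 4) y := by
      simpa using ((hasDerivAt_id y).div_const 4).const_add q
    have h2 : HasDerivAt (fun y => q * Real.exp y / d y)
        ((q * Real.exp y * d y - q * Real.exp y * (q * Real.exp y)) / (d y) ^ 2) y :=
      ((Real.hasDerivAt_exp y).const_mul q).div (hdderiv y) (hdpos y).ne'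
    have hval : 1 / 4 - q * Real.exp y * (1 - q) / (d y) ^ 2 =
        1 / 4 - (q * Real.exp y * d y - q * Real.exp y * (q * Real.exp y)) / (d y) ^ 2 := by
      have hdy : d y = 1 - q + q * Real.exp y := rfl
      rw [hdy]; ring
    rw [hval]; exact h1.sub h2
  have hG'nonneg : ∀ y, 0 ≤ 1 / 4 - q * Real.exp y * (1 - q) / (d y) ^ 2 := by
    intro y
    rw [sub_nonneg, div_le_iff₀ (pow_pos (hdpos y) 2)]
    have : d y = (1 - q) + q * Real.exp y := by simp [hd]
    nlinarith [sq_nonneg ((1 - q) - q * Real.exp y), Real.exp_pos y, hq0]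
  have hGmono : Monotone G := by
    have : ∀ y, 0 ≤ deriv G y := by
      intro y
      rw [(hGderiv y).deriv]
      exact hG'nonneg y
    exact monotone_of_deriv_nonneg (fun y => (hGderiv y).differentiableAt) this
  have hG0 : G 0 = 0 := by simp [hG, hd]
  have hGnonneg : ∀ y, 0 ≤ y → 0 ≤ G y := fun y hy => hG0 ▸ hGmono hy
  have hFmono : MonotoneOn F (Set.Ici (0:ℝ)) := by
    apply monotoneOn_of_deriv_nonneg (convex_Ici 0)
      (Continuous.continuousOn (by
        have : Continuous d := by continuity
        fun_prop (disch := intro y; exact (hdpos y).ne')))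
    · intro y hy
      exact ((hFderiv y).differentiableAt).differentiableWithinAt
    · intro y hy
      rw [(hFderiv y).deriv]
      exact hGnonneg y (le_of_lt (by simpa using hy))
  have hF0 : F 0 = 0 := by simp [hF, hd]
  have : 0 ≤ F x := hF0 ▸ hFmono Set.self_mem_Ici hx (by exact hx)
  have hlog : Real.log (d x) ≤ q * x + x ^ 2 / 8 := by
    simp only [hF] at this; linarith
  calc d x ≤ Real.exp (Real.log (d x)) := le_of_eq (Real.exp_log (hdpos x)).symm
    _ ≤ _ := Real.exp_le_exp.mpr hlog


-- L1 : C(a,j) * b^j ≤ a^j * C(b,j) for a ≤ b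
lemma choose_ratio (a b : ℕ) (hab : a ≤ b) :
    ∀ j, Nat.choose a j * b ^ j ≤ a ^ j * Nat.choose b j := by
  intro j
  induction j with
  | zero => simp
  | succ j ih =>
    have key : Nat.choose a (j+1) * b ^ (j+1) * (j+1) ≤ a ^ (j+1) * Nat.choose b (j+1) * (j+1) := by
      have h1 : Nat.choose a (j+1) * (j+1) = Nat.choose a j * (a - j) := Nat.choose_succ_right_eq a j
      have h2 : Nat.choose b (j+1) * (j+1) = Nat.choose b j * (b - j) := Nat.choose_succ_right_eq b j
      calc Nat.choose a (j+1) * b ^ (j+1) * (j+1)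
          = (Nat.choose a j * b ^ j) * ((a - j) * b) := by
            rw [mul_right_comm, h1]; ring
        _ ≤ (a ^ j * Nat.choose b j) * (a * (b - j)) := by
            apply Nat.mul_le_mul ih
            calc (a - j) * b = a * b - j * b := by rw [Nat.sub_mul]
              _ ≤ a * b - a * j := Nat.sub_le_sub_left (by
                  rw [mul_comm]; exact Nat.mul_le_mul_left j hab) _
              _ = a * (b - j) := (Nat.mul_sub a b j).symm
        _ = a ^ (j+1) * Nat.choose b (j+1) * (j+1) := by
            calc a ^ j * Nat.choose b j * (a * (b - j))
                = a ^ (j+1) * (Nat.choose b j * (b - j)) := by ring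
              _ = a ^ (j+1) * (Nat.choose b (j+1) * (j+1)) := by rw [h2]
              _ = a ^ (j+1) * Nat.choose b (j+1) * (j+1) := by ring
    exact Nat.le_of_mul_le_mul_right key (Nat.succ_pos j)

-- L3 : moment sum bound
lemma moment_sum (n k m j : ℕ) (hk : k ≤ n) :
    ∑ i ∈ range (m+1), Nat.choose k i * Nat.choose (n-k) (m-i) * Nat.choose (m-i) j
      ≤ Nat.choose (n-k) j * Nat.choose (n-j) (m-j) := by
  by_cases hj : j ≤ n - k
  · -- sum over i ≤ m - j only
    by_cases hjm : j ≤ m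
    · have hsub : range (m-j+1) ⊆ range (m+1) := by
        apply range_subset_range.mpr; omega
      rw [← Finset.sum_subset hsub (by
        intro i h1 h2
        simp only [mem_range] at h1 h2
        have : m - i < j := by omega
        simp [Nat.choose_eq_zero_of_lt this])]
      have hterm : ∀ i ∈ range (m-j+1),
          Nat.choose k i * Nat.choose (n-k) (m-i) * Nat.choose (m-i) j
            ≤ Nat.choose (n-k) j * (Nat.choose k i * Nat.choose ((n-j)-k) ((m-j)-i)) := by
        intro i hi
        simp only [mem_range] at hi
        have hji : j ≤ m - i := by omega
        by_cases hmi : m - i ≤ n - k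
        · have := Nat.choose_mul (n := n - k) hji
          rw [mul_assoc, this]
          have e1 : n - k - j = n - j - k := by omega
          have e2 : m - i - j = m - j - i := by omega
          rw [e1, e2]; ring_nf; rfl
        · push_neg at hmi
          rw [Nat.choose_eq_zero_of_lt hmi]
          simp
      calc _ ≤ ∑ i ∈ range (m-j+1),
            Nat.choose (n-k) j * (Nat.choose k i * Nat.choose ((n-j)-k) ((m-j)-i)) :=
            Finset.sum_le_sum hterm
        _ = Nat.choose (n-k) j * ∑ i ∈ range (m-j+1),
            Nat.choose k i * Nat.choose ((n-j)-k) ((m-j)-i) := by rw [Finset.mul_sum]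
        _ = Nat.choose (n-k) j * Nat.choose (n-j) (m-j) := by
            congr 1
            have := Nat.add_choose_eq k ((n-j)-k) (m-j)
            rw [Finset.Nat.sum_antidiagonal_eq_sum_range_succ_mk] at this
            rw [← this]
            congr 1
            omega
    · -- j > m : every term zero
      push_neg at hjm
      have : ∀ i ∈ range (m+1),
          Nat.choose k i * Nat.choose (n-k) (m-i) * Nat.choose (m-i) j = 0 := by
        intro i hi
        have : m - i < j := by omega
        simp [Nat.choose_eq_zero_of_lt this]
      rw [Finset.sum_eq_zero this]
      exact Nat.zero_le _
  · -- j > n - k : every term zero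
    push_neg at hj
    have : ∀ i ∈ range (m+1),
        Nat.choose k i * Nat.choose (n-k) (m-i) * Nat.choose (m-i) j = 0 := by
      intro i hi
      by_cases h : j ≤ m - i
      · have : n - k < m - i := lt_of_lt_of_le hj h
        simp [Nat.choose_eq_zero_of_lt this]
      · push_neg at h
        simp [Nat.choose_eq_zero_of_lt h]
    rw [Finset.sum_eq_zero this]
    exact Nat.zero_le _

lemma inner_bound (n k m j : ℕ) (hk : k ≤ n) (hm : m ≤ n) (hj : j ≤ m) (hn : 0 < n) :
    ((∑ i ∈ range (m+1),
        Nat.choose k i * Nat.choose (n-k) (m-i) * Nat.choose (m-i) j : ℕ) : ℝ)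
        / (Nat.choose n m : ℝ)
      ≤ (Nat.choose m j : ℝ) * (((n-k : ℕ) : ℝ) / n) ^ j := by
  have hnm : (0:ℝ) < (Nat.choose n m : ℝ) := by
    exact_mod_cast Nat.choose_pos hm
  have hnj : (0:ℝ) < (Nat.choose n j : ℝ) := by
    exact_mod_cast Nat.choose_pos (hj.trans hm)
  have hnpos : (0:ℝ) < (n:ℝ) := by exact_mod_cast hn
  have hS : ((∑ i ∈ range (m+1),
      Nat.choose k i * Nat.choose (n-k) (m-i) * Nat.choose (m-i) j : ℕ) : ℝ)
      ≤ (Nat.choose (n-k) j : ℝ) * (Nat.choose (n-j) (m-j) : ℝ) := by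
    exact_mod_cast moment_sum n k m j hk
  have key : (Nat.choose (n-k) j : ℝ) * (n:ℝ) ^ j
      ≤ (((n-k:ℕ)):ℝ) ^ j * (Nat.choose n j : ℝ) := by
    exact_mod_cast choose_ratio (n-k) n (Nat.sub_le n k) j
  have id2 : (Nat.choose n m : ℝ) * (Nat.choose m j : ℝ)
      = (Nat.choose n j : ℝ) * (Nat.choose (n-j) (m-j) : ℝ) := by
    exact_mod_cast Nat.choose_mul (n := n) hj
  rw [div_le_iff₀ hnm]
  have h2 : (0:ℝ) < (Nat.choose n j : ℝ) * (n:ℝ) ^ j := by positivity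
  rw [← mul_le_mul_iff_of_pos_right h2]
  calc ((∑ i ∈ range (m+1),
        Nat.choose k i * Nat.choose (n-k) (m-i) * Nat.choose (m-i) j : ℕ) : ℝ)
        * ((Nat.choose n j : ℝ) * (n:ℝ) ^ j)
      ≤ ((Nat.choose (n-k) j : ℝ) * (Nat.choose (n-j) (m-j) : ℝ))
        * ((Nat.choose n j : ℝ) * (n:ℝ) ^ j) :=
        mul_le_mul_of_nonneg_right hS (le_of_lt h2)
    _ = ((Nat.choose n j : ℝ) * (Nat.choose (n-j) (m-j) : ℝ))
        * ((Nat.choose (n-k) j : ℝ) * (n:ℝ) ^ j) := by ring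
    _ ≤ ((Nat.choose n j : ℝ) * (Nat.choose (n-j) (m-j) : ℝ))
        * ((((n-k:ℕ)):ℝ) ^ j * (Nat.choose n j : ℝ)) := by
        apply mul_le_mul_of_nonneg_left key
        positivity
    _ = (Nat.choose m j : ℝ) * (((n-k : ℕ) : ℝ) / n) ^ j * (Nat.choose n m : ℝ)
        * ((Nat.choose n j : ℝ) * (n:ℝ) ^ j) := by
        rw [← id2, div_pow]
        field_simp

lemma mgf_bound (n k m : ℕ) (hk : k ≤ n) (hm : m ≤ n) (hn : 0 < n) (v : ℝ) (hv : 0 ≤ v) :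
    ∑ i ∈ range (m+1),
        ((Nat.choose k i * Nat.choose (n-k) (m-i) : ℝ) / (Nat.choose n m : ℝ)) * (1+v)^(m-i)
      ≤ (1 + (((n-k : ℕ) : ℝ) / n) * v) ^ m := by
  set q : ℝ := ((n-k : ℕ) : ℝ) / n with hq
  have hq0 : 0 ≤ q := by positivity
  have expand : ∀ i ∈ range (m+1),
      (1+v)^(m-i) = ∑ j ∈ range (m+1), (Nat.choose (m-i) j : ℝ) * v ^ j := by
    intro i hi
    simp only [mem_range] at hi
    have h1 : (v + 1)^(m-i) = ∑ j ∈ range ((m-i)+1),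
        v ^ j * 1 ^ ((m-i) - j) * (Nat.choose (m-i) j : ℝ) := add_pow v 1 (m-i)
    have h2 : ∑ j ∈ range ((m-i)+1), (Nat.choose (m-i) j : ℝ) * v ^ j
        = ∑ j ∈ range (m+1), (Nat.choose (m-i) j : ℝ) * v ^ j := by
      apply Finset.sum_subset (by apply range_subset_range.mpr; omega)
      intro j _ hj
      simp only [mem_range] at hj
      have : m - i < j := by omega
      simp [Nat.choose_eq_zero_of_lt this]
    rw [add_comm, h1, ← h2]
    apply Finset.sum_congr rfl
    intro j _
    rw [one_pow]; ring
  rw [Finset.sum_congr rfl (fun i hi => by rw [expand i hi])]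
  simp only [Finset.mul_sum]
  rw [Finset.sum_comm]
  have step : ∀ j ∈ range (m+1),
      ∑ i ∈ range (m+1),
        ((Nat.choose k i * Nat.choose (n-k) (m-i) : ℝ) / (Nat.choose n m : ℝ))
          * ((Nat.choose (m-i) j : ℝ) * v ^ j)
      ≤ ((Nat.choose m j : ℝ) * q ^ j) * v ^ j := by
    intro j hj
    simp only [mem_range] at hj
    have : ∑ i ∈ range (m+1),
        ((Nat.choose k i * Nat.choose (n-k) (m-i) : ℝ) / (Nat.choose n m : ℝ))
          * ((Nat.choose (m-i) j : ℝ) * v ^ j)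
        = (((∑ i ∈ range (m+1),
            Nat.choose k i * Nat.choose (n-k) (m-i) * Nat.choose (m-i) j : ℕ) : ℝ)
          / (Nat.choose n m : ℝ)) * v ^ j := by
      push_cast
      rw [Finset.sum_div, Finset.sum_mul]
      apply Finset.sum_congr rfl
      intro i _
      ring
    rw [this]
    apply mul_le_mul_of_nonneg_right _ (by positivity)
    exact inner_bound n k m j hk hm (by omega) hn
  calc _ ≤ ∑ j ∈ range (m+1), ((Nat.choose m j : ℝ) * q ^ j) * v ^ j :=
        Finset.sum_le_sum step
    _ = (q * v + 1) ^ m := by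
        rw [add_pow]
        apply Finset.sum_congr rfl
        intro j _
        rw [one_pow, mul_pow]; ring
    _ = (1 + q * v) ^ m := by rw [add_comm]


/-- Chvátal's tail bound for the hypergeometric distribution: if `z` is hypergeometric
with population size `n`, `k` success states and `m` draws, then for `0 ≤ t ≤ k/n`,
`P(z ≤ (k/n − t)·m) ≤ exp(−2 m t²)`. -/
theorem stmt5 {Ω : Type*} [MeasurableSpace Ω] (μ : Measure Ω) [IsProbabilityMeasure μ]
    (n k m : ℕ) (hk : k ≤ n) (hm : m ≤ n) (hn : 0 < n)
    (z : Ω → ℕ) (hz : Measurable z)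
    (hdist : ∀ i : ℕ, μ {ω | z ω = i} =
      ENNReal.ofReal ((Nat.choose k i * Nat.choose (n - k) (m - i) : ℝ) / Nat.choose n m))
    (t : ℝ) (ht0 : 0 ≤ t) (ht : t ≤ (k : ℝ) / n) :
    μ {ω | (z ω : ℝ) ≤ ((k : ℝ) / n - t) * m} ≤ ENNReal.ofReal (Real.exp (-2 * m * t ^ 2)) := by
  have hnpos : (0:ℝ) < (n:ℝ) := by exact_mod_cast hn
  set p : ℝ := (k:ℝ)/n with hp
  set q : ℝ := ((n-k : ℕ) : ℝ)/n with hq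
  have hqp : q = 1 - p := by
    rw [hq, hp, Nat.cast_sub hk]
    field_simp
  have hp0 : 0 ≤ p := by positivity
  have hp1 : p ≤ 1 := by
    rw [hp, div_le_one hnpos]; exact_mod_cast hk
  have hq0 : 0 ≤ q := by positivity
  have hq1 : q ≤ 1 := by rw [hqp]; linarith
  set L : ℝ := 4 * t with hL
  have hL0 : 0 ≤ L := by positivity
  set v : ℝ := Real.exp L - 1 with hv
  have hv0 : 0 ≤ v := by
    rw [hv, sub_nonneg]
    exact Real.one_le_exp hL0
  have h1v : 1 + v = Real.exp L := by rw [hv]; ring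
  set pmf : ℕ → ℝ := fun i =>
    (Nat.choose k i * Nat.choose (n-k) (m-i) : ℝ) / (Nat.choose n m : ℝ) with hpmf
  have hpmf0 : ∀ i, 0 ≤ pmf i := fun i => by rw [hpmf]; positivity
  set F : Finset ℕ := (range (m+1)).filter (fun i => (i:ℝ) ≤ (p - t) * m) with hF
  -- event inclusion
  have hsub : {ω | (z ω : ℝ) ≤ (p - t) * m} ⊆ ⋃ i ∈ F, {ω | z ω = i} := by
    intro ω hω
    simp only [Set.mem_setOf_eq] at hω
    have hle : (z ω : ℝ) ≤ (m:ℝ) := by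
      calc (z ω : ℝ) ≤ (p - t) * m := hω
        _ ≤ 1 * m := by
          apply mul_le_mul_of_nonneg_right _ (by positivity)
          linarith
        _ = m := one_mul _
    have hzm : z ω ≤ m := by exact_mod_cast hle
    simp only [Set.mem_iUnion]
    exact ⟨z ω, by simp [hF, mem_filter, mem_range, Nat.lt_succ_iff, hzm, hω], rfl⟩
  -- measure bound by real sum
  have hmeas : μ {ω | (z ω : ℝ) ≤ (p - t) * m} ≤ ENNReal.ofReal (∑ i ∈ F, pmf i) := by
    calc μ {ω | (z ω : ℝ) ≤ (p - t) * m} ≤ μ (⋃ i ∈ F, {ω | z ω = i}) := measure_mono hsub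
      _ ≤ ∑ i ∈ F, μ {ω | z ω = i} := measure_biUnion_finset_le F _
      _ = ∑ i ∈ F, ENNReal.ofReal (pmf i) := by
          apply Finset.sum_congr rfl
          intro i _
          rw [hdist i, hpmf]
      _ = ENNReal.ofReal (∑ i ∈ F, pmf i) :=
          (ENNReal.ofReal_sum_of_nonneg (fun i _ => hpmf0 i)).symm
  refine hmeas.trans (ENNReal.ofReal_le_ofReal ?_)
  -- the real inequality
  set B : ℝ := Real.exp (L * (q + t) * m) with hB
  have hBpos : 0 < B := Real.exp_pos _
  have step1 : ∀ i ∈ F, pmf i * B ≤ pmf i * (1+v)^(m-i) := by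
    intro i hi
    simp only [hF, mem_filter, mem_range, Nat.lt_succ_iff] at hi
    obtain ⟨him, hit⟩ := hi
    apply mul_le_mul_of_nonneg_left _ (hpmf0 i)
    have hcast : ((m - i : ℕ) : ℝ) = (m:ℝ) - i := by
      rw [Nat.cast_sub him]
    have hpow : (1+v)^(m-i) = Real.exp (L * ((m:ℝ) - i)) := by
      rw [h1v, ← Real.exp_nat_mul, ← hcast]
      congr 1
      push_cast
      ring
    rw [hpow, hB]
    apply Real.exp_le_exp.mpr
    have : (q + t) * m ≤ (m:ℝ) - i := by
      rw [hqp]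
      nlinarith
    nlinarith
  have step2 : (∑ i ∈ F, pmf i) * B ≤ (1 + q*v)^m := by
    calc (∑ i ∈ F, pmf i) * B = ∑ i ∈ F, pmf i * B := by rw [Finset.sum_mul]
      _ ≤ ∑ i ∈ F, pmf i * (1+v)^(m-i) := Finset.sum_le_sum step1
      _ ≤ ∑ i ∈ range (m+1), pmf i * (1+v)^(m-i) := by
          apply Finset.sum_le_sum_of_subset_of_nonneg (Finset.filter_subset _ _)
          intro i _ _
          have : (0:ℝ) ≤ (1+v)^(m-i) := by positivity
          exact mul_nonneg (hpmf0 i) this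
      _ ≤ (1 + q*v)^m := mgf_bound n k m hk hm hn v hv0
  have step3 : (1 + q*v)^m ≤ Real.exp ((q * L + L^2/8) * m) := by
    have h1 : 1 + q*v = 1 - q + q * Real.exp L := by rw [hv]; ring
    have h2 : 0 ≤ 1 + q*v := by positivity
    calc (1 + q*v)^m ≤ (Real.exp (q * L + L^2/8))^m :=
          pow_le_pow_left₀ h2 (h1 ▸ bern_hoeffding q hq0 hq1 L hL0) m
      _ = Real.exp ((q * L + L^2/8) * m) := by
          rw [← Real.exp_nat_mul]
          congr 1
          ring
  have hsplit : Real.exp ((q * L + L^2/8) * m) = Real.exp (-2 * m * t^2) * B := by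
    rw [hB, ← Real.exp_add]
    congr 1
    rw [hL]
    ring
  have final : (∑ i ∈ F, pmf i) * B ≤ Real.exp (-2 * m * t^2) * B := by
    calc (∑ i ∈ F, pmf i) * B ≤ (1 + q*v)^m := step2
      _ ≤ Real.exp ((q * L + L^2/8) * m) := step3
      _ = Real.exp (-2 * m * t^2) * B := hsplit
  exact le_of_mul_le_mul_right final hBpos
end

section
/- Let X ∈ ℝ^{r×n} with n ≥ r and rank(X) = r, let v ∈ ℝ^r, and let Ξ ∈ ℝ^{d×n}, V_⊥ ∈ ℝ^{d×(d−B)} with ‖V_⊥‖ ≤ 1. Define U⋆ ∈ ℝ^{d×r} with orthonormal columns and suppose V_⊥ᵀ(U⋆ x_i + ξ_i) = 0 for all i ∈ [n], where x_i, ξ_i are the columns of X and Ξ. Then ‖V_⊥ᵀ U⋆‖ ≤ ‖Ξ‖ / σ_min(X), where σ_min(X) is the smallest singular value of X and ‖·‖ the spectral norm. -/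
open Matrix
open scoped Matrix.Norms.L2Operator

private lemma rayleigh_lb {m : Type*} [Fintype m] [DecidableEq m] {A : Matrix m m ℝ}
    (hA : A.IsHermitian) {c : ℝ} (hc : ∀ i, c ≤ hA.eigenvalues i) (w : m → ℝ) :
    c * (w ⬝ᵥ w) ≤ w ⬝ᵥ (A *ᵥ w) := by
  have hspec := hA.spectral_theorem
  set U : Matrix m m ℝ := (hA.eigenvectorUnitary : Matrix m m ℝ) with hUdef
  have hUU : U * star U = 1 := mem_unitaryGroup_iff.mp hA.eigenvectorUnitary.2
  have hstarU : star U *ᵥ w = w ᵥ* U := by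
    rw [star_eq_conjTranspose, conjTranspose_eq_transpose_of_trivial, mulVec_transpose]
  set y := w ᵥ* U with hy
  have hD : diagonal (RCLike.ofReal ∘ hA.eigenvalues) = diagonal hA.eigenvalues := by
    congr 1
  have hyy : w ⬝ᵥ w = y ⬝ᵥ y := by
    have h1 : w ⬝ᵥ w = w ⬝ᵥ (U * star U) *ᵥ w := by rw [hUU, one_mulVec]
    rw [h1, ← mulVec_mulVec, dotProduct_mulVec, hstarU]
  have hAw : w ⬝ᵥ (A *ᵥ w) = ∑ i, hA.eigenvalues i * (y i * y i) := by
    conv_lhs => rw [hspec]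
    rw [hD, Unitary.conjStarAlgAut_apply, ← hUdef, ← mulVec_mulVec, ← mulVec_mulVec,
      dotProduct_mulVec, hstarU]
    simp only [dotProduct, mulVec_diagonal]
    exact Finset.sum_congr rfl fun i _ => by ring
  rw [hyy, hAw, dotProduct, Finset.mul_sum]
  exact Finset.sum_le_sum fun i _ =>
    mul_le_mul_of_nonneg_right (hc i) (mul_self_nonneg _)

private lemma dot_self_nonneg' {m : Type*} [Fintype m] (y : m → ℝ) : 0 ≤ y ⬝ᵥ y :=
  Finset.sum_nonneg fun _ _ => mul_self_nonneg _

private lemma euc_norm_eq {m : Type*} [Fintype m] (y : EuclideanSpace ℝ m) :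
    ‖y‖ = Real.sqrt ((y : m → ℝ) ⬝ᵥ (y : m → ℝ)) := by
  rw [EuclideanSpace.norm_eq]
  congr 1
  simp [dotProduct, Real.norm_eq_abs, sq_abs, sq]

private lemma mulVec_norm_le {m k : Type*} [Fintype m] [Fintype k] [DecidableEq m] [DecidableEq k]
    (A : Matrix m k ℝ) (v : k → ℝ) :
    Real.sqrt ((A *ᵥ v) ⬝ᵥ (A *ᵥ v)) ≤ ‖A‖ * Real.sqrt (v ⬝ᵥ v) := by
  have h := Matrix.l2_opNorm_mulVec A ((WithLp.equiv 2 (k → ℝ)).symm v)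
  rw [euc_norm_eq, euc_norm_eq] at h
  exact h

/-- Let `X ∈ ℝ^{r×n}` with `n ≥ r` and `rank(X) = r`, `Ξ ∈ ℝ^{d×n}`, and
`V_⊥ ∈ ℝ^{d×(d−B)}` with `‖V_⊥‖ ≤ 1`. Let `U⋆ ∈ ℝ^{d×r}` have orthonormal columns
and suppose `V_⊥ᵀ(U⋆ X + Ξ) = 0`. Then `‖V_⊥ᵀ U⋆‖ ≤ ‖Ξ‖ / σ_min(X)`, where
`σ_min(X) = √(γ_min(X Xᵀ))` is the smallest singular value of `X`. -/
theorem stmt18 {d B r n : ℕ} (hrn : r ≤ n) (hr : 0 < r)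
    (X : Matrix (Fin r) (Fin n) ℝ) (hrank : X.rank = r)
    (Xi : Matrix (Fin d) (Fin n) ℝ)
    (Vperp : Matrix (Fin d) (Fin (d - B)) ℝ) (hVperp : ‖Vperp‖ ≤ 1)
    (Ustar : Matrix (Fin d) (Fin r) ℝ) (hU : Ustarᵀ * Ustar = 1)
    (hzero : Vperpᵀ * (Ustar * X + Xi) = 0) :
    ‖Vperpᵀ * Ustar‖ ≤
      ‖Xi‖ / Real.sqrt (⨅ i, (Matrix.isHermitian_mul_conjTranspose_self X).eigenvalues i) := by
  classical
  have hA := Matrix.isHermitian_mul_conjTranspose_self X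
  set G : Matrix (Fin r) (Fin r) ℝ := X * Xᴴ with hGdef
  have hrFin : Nonempty (Fin r) := ⟨⟨0, hr⟩⟩
  have hGrank : G.rank = r := by rw [hGdef, rank_self_mul_conjTranspose, hrank]
  have heigpos : ∀ i, 0 < hA.eigenvalues i := by
    intro i
    rcases (Matrix.eigenvalues_self_mul_conjTranspose_nonneg X i).lt_or_eq with h | h
    · exact h
    · exfalso
      have hcard := hA.rank_eq_card_non_zero_eigs
      rw [hGrank] at hcard
      have hlt : Fintype.card {j // hA.eigenvalues j ≠ 0} < Fintype.card (Fin r) :=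
        Fintype.card_subtype_lt (x := i) (by simp [← h])
      rw [Fintype.card_fin] at hlt
      omega
  set lam : ℝ := ⨅ i, hA.eigenvalues i with hlamdef
  have hlam_le : ∀ i, lam ≤ hA.eigenvalues i := fun i =>
    ciInf_le (Set.Finite.bddBelow (Set.finite_range _)) i
  have hlam_pos : 0 < lam := by
    obtain ⟨i, hi⟩ := exists_eq_ciInf_of_finite (f := fun i => hA.eigenvalues i)
    rw [hlamdef, ← hi]
    exact heigpos i
  have hsig_pos : 0 < Real.sqrt lam := Real.sqrt_pos.mpr hlam_pos
  have hdetG : G.det = ∏ i, hA.eigenvalues i := by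
    simpa using hA.det_eq_prod_eigenvalues
  have hdet : IsUnit G.det := by
    rw [hdetG]
    exact (Finset.prod_pos fun i _ => heigpos i).ne'.isUnit
  have hGinv : G * G⁻¹ = 1 := mul_nonsing_inv G hdet
  set P : Matrix (Fin n) (Fin r) ℝ := Xᴴ * G⁻¹ with hPdef
  have hXP : X * P = 1 := by rw [hPdef, ← Matrix.mul_assoc, ← hGdef, hGinv]
  have hAX : (Vperpᵀ * Ustar) * X = -(Vperpᵀ * Xi) := by
    rw [Matrix.mul_assoc]
    rw [Matrix.mul_add] at hzero
    exact eq_neg_of_add_eq_zero_left hzero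
  have hVnorm : ‖Vperpᵀ * Xi‖ ≤ ‖Xi‖ := by
    calc ‖Vperpᵀ * Xi‖ ≤ ‖Vperpᵀ‖ * ‖Xi‖ := Matrix.l2_opNorm_mul _ _
    _ ≤ 1 * ‖Xi‖ := by
        apply mul_le_mul_of_nonneg_right _ (norm_nonneg _)
        rw [← conjTranspose_eq_transpose_of_trivial, Matrix.l2_opNorm_conjTranspose]
        exact hVperp
    _ = ‖Xi‖ := one_mul _
  show ‖Vperpᵀ * Ustar‖ ≤ ‖Xi‖ / Real.sqrt lam
  rw [Matrix.l2_opNorm_def]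
  apply ContinuousLinearMap.opNorm_le_bound _ (by positivity)
  intro x
  simp only [LinearEquiv.trans_apply, Matrix.toEuclideanLin_apply,
    LinearMap.coe_toContinuousLinearMap']
  set x' : Fin r → ℝ := (WithLp.equiv 2 (Fin r → ℝ)) x with hx'def
  set w : Fin r → ℝ := G⁻¹ *ᵥ x' with hwdef
  set lv : Fin n → ℝ := P *ᵥ x' with hlvdef
  have hxw : x' = G *ᵥ w := by rw [hwdef, mulVec_mulVec, hGinv, one_mulVec]
  have hlvw : lv = w ᵥ* X := by
    rw [hlvdef, hPdef, ← mulVec_mulVec, conjTranspose_eq_transpose_of_trivial,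
      mulVec_transpose, hwdef]
  have hlv2 : lv ⬝ᵥ lv = w ⬝ᵥ (G *ᵥ w) := by
    conv_lhs => rw [hlvw, ← dotProduct_mulVec, ← mulVec_transpose, mulVec_mulVec]
    rw [hGdef, conjTranspose_eq_transpose_of_trivial]
  have hray : lam * (w ⬝ᵥ w) ≤ w ⬝ᵥ (G *ᵥ w) := rayleigh_lb hA hlam_le w
  have hCS : (w ⬝ᵥ (G *ᵥ w)) ^ 2 ≤ (w ⬝ᵥ w) * ((G *ᵥ w) ⬝ᵥ (G *ᵥ w)) := by
    have := Finset.sum_mul_sq_le_sq_mul_sq Finset.univ w (G *ᵥ w)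
    simpa [dotProduct, sq] using this
  have hs : 0 ≤ w ⬝ᵥ w := dot_self_nonneg' w
  have hq : 0 ≤ (G *ᵥ w) ⬝ᵥ (G *ᵥ w) := dot_self_nonneg' _
  have ht : 0 ≤ w ⬝ᵥ (G *ᵥ w) := le_trans (mul_nonneg hlam_pos.le hs) hray
  have hkey : lam * (w ⬝ᵥ (G *ᵥ w)) ≤ (G *ᵥ w) ⬝ᵥ (G *ᵥ w) := by
    rcases hs.eq_or_lt with hs0 | hs0
    · have hzero' : (w ⬝ᵥ w) * ((G *ᵥ w) ⬝ᵥ (G *ᵥ w)) = 0 := by rw [← hs0]; ring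
      have ht2 : (w ⬝ᵥ (G *ᵥ w)) ^ 2 ≤ 0 := by linarith
      have ht0 : w ⬝ᵥ (G *ᵥ w) = 0 :=
        (pow_eq_zero_iff two_ne_zero).mp (le_antisymm ht2 (sq_nonneg _))
      rw [ht0, mul_zero]; exact hq
    · nlinarith [mul_le_mul_of_nonneg_right hray ht, hCS]
  have hxnorm : ‖x‖ = Real.sqrt (x' ⬝ᵥ x') := euc_norm_eq x
  have hlv_norm : Real.sqrt (lv ⬝ᵥ lv) ≤ ‖x‖ / Real.sqrt lam := by
    have h1 : lv ⬝ᵥ lv ≤ (x' ⬝ᵥ x') / lam := by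
      rw [le_div_iff₀ hlam_pos, hlv2]
      calc w ⬝ᵥ (G *ᵥ w) * lam = lam * (w ⬝ᵥ (G *ᵥ w)) := by ring
      _ ≤ (G *ᵥ w) ⬝ᵥ (G *ᵥ w) := hkey
      _ = x' ⬝ᵥ x' := by rw [← hxw]
    calc Real.sqrt (lv ⬝ᵥ lv) ≤ Real.sqrt ((x' ⬝ᵥ x') / lam) := Real.sqrt_le_sqrt h1
    _ = Real.sqrt (x' ⬝ᵥ x') / Real.sqrt lam := Real.sqrt_div (dot_self_nonneg' _) _
    _ = ‖x‖ / Real.sqrt lam := by rw [hxnorm]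
  have hx'' : x' = X *ᵥ lv := by rw [hlvdef, mulVec_mulVec, hXP, one_mulVec]
  have hmv : (Vperpᵀ * Ustar) *ᵥ x' = (-(Vperpᵀ * Xi)) *ᵥ lv := by
    conv_lhs => rw [hx'', mulVec_mulVec, hAX]
  rw [show x.ofLp = x' from rfl, hmv]
  calc ‖(WithLp.equiv 2 (Fin (d - B) → ℝ)).symm ((-(Vperpᵀ * Xi)) *ᵥ lv)‖
      = Real.sqrt (((-(Vperpᵀ * Xi)) *ᵥ lv) ⬝ᵥ ((-(Vperpᵀ * Xi)) *ᵥ lv)) := euc_norm_eq _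
    _ ≤ ‖-(Vperpᵀ * Xi)‖ * Real.sqrt (lv ⬝ᵥ lv) := mulVec_norm_le _ _
    _ ≤ ‖Xi‖ * (‖x‖ / Real.sqrt lam) :=
        mul_le_mul (by rw [norm_neg]; exact hVnorm) hlv_norm (Real.sqrt_nonneg _)
          (norm_nonneg _)
    _ = ‖Xi‖ / Real.sqrt lam * ‖x‖ := by ring
end
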